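/- Define q(k, F_n) = R_k / R_{F_n + k} as a rational number. Then for all n ≥ 3 and all k with 0 ≤ k ≤ F_{n−1} − 1: q(T(k), F_{n+1}) = q(k, F_n), and, if moreover k ≥ 1, q(ρ₂(k), F_{n+2}) = (R_k + R_{k−1}) / (R_{F_n+k} + R_{F_n+k−1}), where T(n) = ⌊nφ + 2/φ⌋ and ρ₂(n) = ⌊nφ² + 1/φ⌋. -/

import Mathlib

/-- The golden ratio `φ = (1 + √5)/2`. -/
noncomputable def phi : ℝ := (1 + Real.sqrt 5) / 2

noncomputable def psi : ℝ := (1 - Real.sqrt 5) / 2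

lemma sqrt5_sq : Real.sqrt 5 ^ 2 = 5 := Real.sq_sqrt (by norm_num)
lemma sqrt5_gt : (2.2360679 : ℝ) < Real.sqrt 5 := by
  have : (2.2360679 : ℝ) = Real.sqrt (2.2360679^2) := (Real.sqrt_sq (by norm_num)).symm
  rw [this]; exact Real.sqrt_lt_sqrt (by norm_num) (by norm_num)
lemma sqrt5_lt : Real.sqrt 5 < 2.2360680 := by
  have : (2.2360680 : ℝ) = Real.sqrt (2.2360680^2) := (Real.sqrt_sq (by norm_num)).symm
  rw [this]; exact Real.sqrt_lt_sqrt (by norm_num) (by norm_num)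

lemma phi_sq : phi ^ 2 = phi + 1 := by
  unfold phi; have := sqrt5_sq; nlinarith
lemma psi_sq : psi ^ 2 = psi + 1 := by
  unfold psi; have := sqrt5_sq; nlinarith
lemma phi_gt : (1.6180339 : ℝ) < phi := by unfold phi; have := sqrt5_gt; linarith
lemma phi_lt : phi < 1.6180340 := by unfold phi; have := sqrt5_lt; linarith
lemma phi_pos : 0 < phi := by linarith [phi_gt]
lemma psi_eq : psi = 1 - phi := by unfold psi phi; ring
lemma phi_mul_psi : phi * psi = -1 := by unfold phi psi; have := sqrt5_sq; nlinarith
lemma phi_inv : phi⁻¹ = phi - 1 :=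
  inv_eq_of_mul_eq_one_right (by nlinarith [phi_sq])
lemma psi_eq_neg_inv : psi = -phi⁻¹ := by rw [phi_inv, psi_eq]; ring
lemma phi_inv_pos : 0 < phi⁻¹ := by rw [phi_inv]; linarith [phi_gt]
lemma phi_inv_lt_one : phi⁻¹ < 1 := by rw [phi_inv]; linarith [phi_lt]

lemma fib_phi : ∀ i : ℕ, (Nat.fib i : ℝ) * phi = Nat.fib (i+1) - psi ^ i := by
  intro i
  induction i using Nat.twoStepInduction with
  | zero => simp
  | one => simp [Nat.fib_one, psi_eq]
  | more n ih1 ih2 =>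
    have e1 : (Nat.fib (n+2) : ℝ) = Nat.fib n + Nat.fib (n+1) := by
      rw [Nat.fib_add_two]; push_cast; ring
    have e2 : (Nat.fib (n+2+1) : ℝ) = Nat.fib (n+1) + Nat.fib (n+2) := by
      rw [show n+2+1 = (n+1)+2 from rfl, Nat.fib_add_two]; push_cast; ring
    have e3 : psi^(n+2) = psi^n * psi^2 := by ring
    rw [e1, e2, add_mul, ih1, ih2, e3, psi_sq]; ring

lemma phi_mul_inv : phi * phi⁻¹ = 1 := mul_inv_cancel₀ (ne_of_gt phi_pos)
lemma one_add_inv : 1 + phi⁻¹ = phi := by rw [phi_inv]; nlinarith [phi_sq]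

lemma sum_psi_bounds : ∀ (N : ℕ) (S : Finset ℕ), S.card ≤ N → ∀ c : ℕ, (∀ i ∈ S, c ≤ i) →
    -(phi⁻¹ ^ c) < (-1:ℝ)^c * ∑ i ∈ S, psi ^ i ∧ (-1:ℝ)^c * ∑ i ∈ S, psi ^ i < phi * phi⁻¹ ^ c := by
  intro N
  induction N with
  | zero =>
    intro S hS c _
    rw [Finset.card_eq_zero.mp (Nat.le_zero.mp hS), Finset.sum_empty, mul_zero]
    have h1 := pow_pos phi_inv_pos c
    exact ⟨neg_lt_zero.mpr h1, mul_pos phi_pos h1⟩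
  | succ N ih =>
    intro S hS c hc
    rcases S.eq_empty_or_nonempty with rfl | hne
    · rw [Finset.sum_empty, mul_zero]
      have h1 := pow_pos phi_inv_pos c
      exact ⟨neg_lt_zero.mpr h1, mul_pos phi_pos h1⟩
    · set m := S.min' hne with hm
      have hmS : m ∈ S := S.min'_mem hne
      have hcm : c ≤ m := hc m hmS
      have hS' : ∀ i ∈ S.erase m, m + 1 ≤ i := by
        intro i hi
        rcases Finset.mem_erase.mp hi with ⟨hne2, hiS⟩
        exact Nat.lt_of_le_of_ne (S.min'_le i hiS) (Ne.symm hne2)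
      have hcard : (S.erase m).card ≤ N := by
        have := Finset.card_erase_of_mem hmS
        omega
      obtain ⟨ihl, ihr⟩ := ih (S.erase m) hcard (m+1) hS'
      have hsplit : ∑ i ∈ S, psi ^ i = psi ^ m + ∑ i ∈ S.erase m, psi ^ i :=
        (Finset.add_sum_erase S _ hmS).symm
      have hpm : (-1:ℝ)^m * psi ^ m = phi⁻¹ ^ m := by
        rw [psi_eq_neg_inv, ← mul_pow]
        norm_num
      have hneg : ((-1:ℝ))^(m+1) = -((-1:ℝ)^m) := by ring
      rw [hneg] at ihl ihr
      -- A := (-1)^m * ∑_S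
      have hA : (-1:ℝ)^m * ∑ i ∈ S, psi ^ i
          = phi⁻¹ ^ m + (-1:ℝ)^m * ∑ i ∈ S.erase m, psi ^ i := by
        rw [hsplit, mul_add, hpm]
      have key1 : 0 < (-1:ℝ)^m * ∑ i ∈ S, psi ^ i := by
        rw [hA]
        have : phi * phi⁻¹ ^ (m+1) = phi⁻¹ ^ m := by
          rw [pow_succ, ← mul_assoc, mul_comm phi, mul_assoc, phi_mul_inv, mul_one]
        nlinarith [ihr]
      have key2 : (-1:ℝ)^m * ∑ i ∈ S, psi ^ i < phi * phi⁻¹ ^ m := by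
        rw [hA]
        have h1 : phi⁻¹ ^ (m+1) = phi⁻¹ ^ m * phi⁻¹ := pow_succ _ _
        have h2 : phi * phi⁻¹ ^ m = phi⁻¹ ^ m * (1 + phi⁻¹) := by rw [one_add_inv]; ring
        nlinarith [ihl]
      -- now transport from m to c
      rcases Nat.even_or_odd (m - c) with he | ho
      · have hsign : ((-1:ℝ))^m = (-1)^c := by
          rw [← Nat.add_sub_cancel' hcm, pow_add, he.neg_one_pow, mul_one]
        have hmono : phi⁻¹ ^ m ≤ phi⁻¹ ^ c :=
          pow_le_pow_of_le_one (le_of_lt phi_inv_pos) (le_of_lt phi_inv_lt_one) hcm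
        rw [hsign] at key1 key2
        constructor
        · have : (0:ℝ) < phi⁻¹ ^ c := pow_pos phi_inv_pos c
          linarith
        · have : phi * phi⁻¹ ^ m ≤ phi * phi⁻¹ ^ c := by nlinarith [phi_pos]
          linarith
      · have hcm1 : c + 1 ≤ m := by
          rcases ho with ⟨t, ht⟩; omega
        have hsign : ((-1:ℝ))^m = -((-1)^c) := by
          rw [← Nat.add_sub_cancel' hcm, pow_add, ho.neg_one_pow]; ring
        rw [hsign] at key1 key2
        have hmono : phi⁻¹ ^ m ≤ phi⁻¹ ^ (c+1) :=
          pow_le_pow_of_le_one (le_of_lt phi_inv_pos) (le_of_lt phi_inv_lt_one) hcm1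
        have h1 : phi * phi⁻¹ ^ (c+1) = phi⁻¹ ^ c := by
          rw [pow_succ, ← mul_assoc, mul_comm phi, mul_assoc, phi_mul_inv, mul_one]
        constructor
        · nlinarith [phi_pos]
        · have h2 : (0:ℝ) < phi⁻¹ ^ c := pow_pos phi_inv_pos c
          nlinarith [phi_pos]

/-- `ρ₂(n) = ⌊nφ² + 1/φ⌋`. -/
noncomputable def rho2 (n : ℕ) : ℕ := ⌊(n : ℝ) * phi ^ 2 + 1 / phi⌋₊

/-- `T(n) = ⌊nφ + 2/φ⌋`. -/
noncomputable def T (n : ℕ) : ℕ := ⌊(n : ℝ) * phi + 2 / phi⌋₊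

/-- `R n` is the number of representations of `n` as a sum of distinct
Fibonacci numbers `F i`, `i ≥ 2`. -/
noncomputable def R (n : ℕ) : ℕ :=
  Nat.card {S : Finset ℕ // (∀ i ∈ S, 2 ≤ i) ∧ ∑ i ∈ S, Nat.fib i = n}

/-- `q(k, F n) = R k / R (F n + k)` as a rational number. -/
noncomputable def q (k m : ℕ) : ℚ := (R k : ℚ) / (R (m + k) : ℚ)

noncomputable def sh (j : ℕ) : ℕ := ⌊(j:ℝ) * phi + phi⁻¹⌋₊

lemma phi_inv_sq : phi⁻¹^2 = 2 - phi := by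
  rw [phi_inv]; nlinarith [phi_sq]

lemma rep_real_sum (S : Finset ℕ) :
    (∑ i ∈ S, (Nat.fib (i+1) : ℝ)) = (∑ i ∈ S, (Nat.fib i : ℕ) : ℕ) * phi + ∑ i ∈ S, psi ^ i := by
  push_cast
  rw [Finset.sum_mul, ← Finset.sum_add_distrib]
  refine Finset.sum_congr rfl fun i _ => ?_
  rw [fib_phi i]; ring

lemma sum_psi_window (S : Finset ℕ) (h2 : ∀ i ∈ S, 2 ≤ i) :
    -(phi⁻¹^2) < ∑ i ∈ S, psi ^ i ∧ ∑ i ∈ S, psi ^ i < phi⁻¹ := by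
  obtain ⟨hl, hr⟩ := sum_psi_bounds S.card S le_rfl 2 h2
  simp only [neg_one_sq, one_mul] at hl hr
  have e1 : phi * phi⁻¹^2 = phi⁻¹ := by
    rw [pow_two, ← mul_assoc, phi_mul_inv, one_mul]
  exact ⟨hl, by linarith [hr, e1.symm.le]⟩

lemma sh_spec (S : Finset ℕ) (h2 : ∀ i ∈ S, 2 ≤ i) :
    ∑ i ∈ S, Nat.fib (i+1) = sh (∑ i ∈ S, Nat.fib i) := by
  set j := ∑ i ∈ S, Nat.fib i with hj
  obtain ⟨hl, hr⟩ := sum_psi_window S h2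
  have hre : ((∑ i ∈ S, Nat.fib (i+1) : ℕ) : ℝ) = (j:ℝ) * phi + ∑ i ∈ S, psi ^ i := by
    rw [hj, Nat.cast_sum]
    exact rep_real_sum S
  have h0 : (0:ℝ) ≤ (j:ℝ) * phi + phi⁻¹ :=
    add_nonneg (mul_nonneg (Nat.cast_nonneg j) phi_pos.le) phi_inv_pos.le
  apply le_antisymm
  · apply Nat.le_floor
    rw [hre]
    linarith
  · have hlt : sh j < (∑ i ∈ S, Nat.fib (i+1)) + 1 := by
      rw [sh, Nat.floor_lt h0]
      push_cast at hre ⊢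
      have e2 := phi_inv_sq
      have e3 := phi_inv
      nlinarith [hre, hl]
    omega

lemma eps_spec (S : Finset ℕ) (h2 : ∀ i ∈ S, 2 ≤ i) :
    (sh (∑ i ∈ S, Nat.fib i) : ℝ) - (∑ i ∈ S, Nat.fib i : ℕ) * phi = ∑ i ∈ S, psi ^ i := by
  rw [← sh_spec S h2]
  have := rep_real_sum S
  push_cast at this ⊢
  linarith

noncomputable def eps (j : ℕ) : ℝ := (sh j : ℝ) - (j:ℝ) * phi

lemma lt_fib_add_two : ∀ m : ℕ, m < Nat.fib (m+2) := by
  intro m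
  induction m with
  | zero => norm_num
  | succ p ih =>
    have h1 : 1 ≤ Nat.fib (p+1) := Nat.fib_pos.mpr (by omega)
    have h2 : Nat.fib (p+3) = Nat.fib (p+1) + Nat.fib (p+2) := Nat.fib_add_two
    have h3 : Nat.fib (p+1+2) = Nat.fib (p+3) := by norm_num
    omega

lemma exists_zeck : ∀ m : ℕ, ∃ S : Finset ℕ,
    (∀ i ∈ S, 2 ≤ i) ∧ (∀ i ∈ S, i+1 ∉ S) ∧ ∑ i ∈ S, Nat.fib i = m := by
  intro m
  induction m using Nat.strong_induction_on with
  | _ m ih =>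
  rcases Nat.eq_zero_or_pos m with rfl | hm
  · exact ⟨∅, by simp⟩
  · set P := fun c => Nat.fib c ≤ m with hP
    set c := Nat.findGreatest P (m+2) with hc
    have hP2 : P 2 := by
      show Nat.fib 2 ≤ m
      rw [Nat.fib_two]
      omega
    have hc2 : 2 ≤ c := by
      rw [hc]
      exact Nat.le_findGreatest (by omega) hP2
    have hspec : Nat.fib c ≤ m := by
      rw [hc]
      exact Nat.findGreatest_spec (show 2 ≤ m+2 by omega) hP2
    have hcm : c ≤ m + 1 := by
      have hle : c ≤ m + 2 := by
        rw [hc]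
        exact Nat.findGreatest_le (m+2)
      rcases Nat.lt_or_ge c (m+2) with h | h
      · omega
      · exfalso
        have hceq : c = m + 2 := by omega
        have hlt := lt_fib_add_two m
        rw [hceq] at hspec
        omega
    have hnot : ¬ P (c+1) := by
      refine Nat.findGreatest_is_greatest (n := m+2) (k := c+1) ?_ (by omega)
      rw [← hc]
      omega
    have hlt : m < Nat.fib (c+1) := by simpa [hP] using hnot
    -- recurse on m - fib c
    have hfibpos : 0 < Nat.fib c := Nat.fib_pos.mpr (by omega)
    obtain ⟨S', h2', hz', hsum'⟩ := ih (m - Nat.fib c) (by omega)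
    have hsmall : ∀ i ∈ S', i ≤ c - 2 := by
      intro i hi
      by_contra h
      have hge : c - 1 ≤ i := by omega
      have h1 : Nat.fib (c-1) ≤ Nat.fib i := Nat.fib_mono hge
      have h2 : Nat.fib i ≤ m - Nat.fib c := by
        rw [← hsum']
        exact Finset.single_le_sum (fun i _ => Nat.zero_le _) hi
      have e : c - 1 + 2 = c + 1 := by omega
      have e2 : c - 1 + 1 = c := by omega
      have h3 : Nat.fib (c+1) = Nat.fib (c-1) + Nat.fib c := by
        rw [← e, Nat.fib_add_two, e2]
      omega
    have hcnot : c ∉ S' := fun h => by have := hsmall c h; omega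
    refine ⟨insert c S', ?_, ?_, ?_⟩
    · intro i hi
      rcases Finset.mem_insert.mp hi with rfl | hi'
      · omega
      · exact h2' i hi'
    · intro i hi
      rcases Finset.mem_insert.mp hi with rfl | hi'
      · intro hmem
        rcases Finset.mem_insert.mp hmem with h | h
        · omega
        · have := hsmall _ h; omega
      · intro hmem
        rcases Finset.mem_insert.mp hmem with h | h
        · have := hsmall _ hi'; omega
        · exact hz' i hi' h
    · rw [Finset.sum_insert hcnot, hsum']
      omega

lemma eps_eq_sum (S : Finset ℕ) (h2 : ∀ i ∈ S, 2 ≤ i) :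
    eps (∑ i ∈ S, Nat.fib i) = ∑ i ∈ S, psi ^ i := eps_spec S h2

lemma eps_window (j : ℕ) : -(phi⁻¹^2) < eps j ∧ eps j < phi⁻¹ := by
  obtain ⟨S, h2, _, hsum⟩ := exists_zeck j
  rw [← hsum, eps_eq_sum S h2]
  exact sum_psi_window S h2

lemma eps_sign (j : ℕ) (hj : 1 ≤ j) : ∃ c, 2 ≤ c ∧ Nat.fib c ≤ j ∧
    phi⁻¹^(c+1) < (-1:ℝ)^c * eps j ∧ (-1:ℝ)^c * eps j < phi⁻¹^(c-1) := by
  obtain ⟨S, h2, hz, hsum⟩ := exists_zeck j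
  have hne : S.Nonempty := by
    rcases S.eq_empty_or_nonempty with rfl | h
    · simp at hsum; omega
    · exact h
  have hcS : S.min' hne ∈ S := S.min'_mem hne
  obtain ⟨d, hd⟩ : ∃ d, S.min' hne = d + 2 := ⟨S.min' hne - 2, by have := h2 _ hcS; omega⟩
  rw [hd] at hcS
  refine ⟨d+2, by omega, ?_, ?_⟩
  · rw [← hsum]
    exact Finset.single_le_sum (fun i _ => Nat.zero_le _) hcS
  · have hS' : ∀ i ∈ S.erase (d+2), d+2+2 ≤ i := by
      intro i hi
      rcases Finset.mem_erase.mp hi with ⟨hne2, hiS⟩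
      have h1 : d+2 ≤ i := hd ▸ S.min'_le i hiS
      have h3 : i ≠ d+2+1 := by
        intro h
        exact hz (d+2) hcS (h ▸ hiS)
      omega
    obtain ⟨ihl, ihr⟩ := sum_psi_bounds (S.erase (d+2)).card _ le_rfl (d+2+2) hS'
    have hsplit : ∑ i ∈ S, psi ^ i = psi ^ (d+2) + ∑ i ∈ S.erase (d+2), psi ^ i :=
      (Finset.add_sum_erase S _ hcS).symm
    have heps : eps j = ∑ i ∈ S, psi ^ i := by rw [← hsum]; exact eps_eq_sum S h2
    have hpm : (-1:ℝ)^(d+2) * psi ^ (d+2) = phi⁻¹ ^ (d+2) := by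
      rw [psi_eq_neg_inv, ← mul_pow]
      norm_num
    have hsame : ((-1:ℝ))^(d+2+2) = (-1:ℝ)^(d+2) := by ring
    rw [hsame] at ihl ihr
    have hA : (-1:ℝ)^(d+2) * eps j
        = phi⁻¹ ^ (d+2) + (-1:ℝ)^(d+2) * ∑ i ∈ S.erase (d+2), psi ^ i := by
      rw [heps, hsplit, mul_add, hpm]
    constructor
    · rw [hA]
      have e1 : phi⁻¹^(d+2) - phi⁻¹^(d+2+2) = phi⁻¹^(d+2+1) := by
        have h1 : phi⁻¹^(d+2+1) = phi⁻¹^(d+2) * phi⁻¹ := pow_succ _ _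
        have h2 : phi⁻¹^(d+2+2) = phi⁻¹^(d+2) * phi⁻¹^2 := by ring
        rw [h1, h2, phi_inv_sq, phi_inv]
        have h3 : (0:ℝ) < phi⁻¹^(d+2) := pow_pos phi_inv_pos _
        nlinarith [phi_sq]
      have : phi⁻¹^(d+2+1) = phi⁻¹^(d+3) := by norm_num
      linarith [ihl]
    · rw [hA]
      have e2 : phi⁻¹^(d+2) + phi * phi⁻¹^(d+2+2) = phi⁻¹^(d+1) := by
        have h1 : phi * phi⁻¹^(d+2+2) = phi⁻¹^(d+2+1) := by
          rw [pow_succ _ (d+2+1), ← mul_assoc, mul_comm phi, mul_assoc, phi_mul_inv, mul_one]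
        rw [h1]
        have h2 : phi⁻¹^(d+2) = phi⁻¹^(d+1) * phi⁻¹ := by ring
        have h3 : phi⁻¹^(d+2+1) = phi⁻¹^(d+1) * phi⁻¹^2 := by ring
        rw [h2, h3, phi_inv_sq, phi_inv]
        have h4 : (0:ℝ) < phi⁻¹^(d+1) := pow_pos phi_inv_pos _
        nlinarith [phi_sq]
      have : (d+2) - 1 = d + 1 := by omega
      rw [this]
      linarith [ihr]

lemma eps_ne (j : ℕ) (hj : 1 ≤ j) : eps j ≠ 0 := by
  obtain ⟨c, _, _, hl, _⟩ := eps_sign j hj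
  intro h
  rw [h, mul_zero] at hl
  exact absurd hl (not_lt.mpr (pow_pos phi_inv_pos _).le)

lemma sh_cast (j : ℕ) : ((sh j : ℕ) : ℝ) = (j:ℝ) * phi + eps j := by
  unfold eps; ring

lemma sh_succ_ge (j : ℕ) : sh j + 1 ≤ sh (j+1) := by
  have h0 : (0:ℝ) ≤ (j:ℝ) * phi + phi⁻¹ :=
    add_nonneg (mul_nonneg (Nat.cast_nonneg j) phi_pos.le) phi_inv_pos.le
  have h1 : sh j + 1 = ⌊((j:ℝ) * phi + phi⁻¹) + 1⌋₊ := by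
    rw [Nat.floor_add_one h0, sh]
  rw [h1, sh]
  apply Nat.floor_le_floor
  push_cast
  nlinarith [phi_gt]

lemma sh_succ_le (j : ℕ) : sh (j+1) ≤ sh j + 2 := by
  have h1 : sh j + 2 = ⌊((j:ℝ) * phi + phi⁻¹) + 2⌋₊ := by
    rw [show ((2:ℝ)) = ((2:ℕ):ℝ) by norm_num, Nat.floor_add_natCast
      (add_nonneg (mul_nonneg (Nat.cast_nonneg j) phi_pos.le) phi_inv_pos.le), sh]
  rw [h1, sh]
  apply Nat.floor_le_floor
  push_cast
  nlinarith [phi_lt]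

lemma sh_add3 (j : ℕ) : sh j + 3 ≤ sh (j+2) := by
  have h0 : (0:ℝ) ≤ (j:ℝ) * phi + phi⁻¹ :=
    add_nonneg (mul_nonneg (Nat.cast_nonneg j) phi_pos.le) phi_inv_pos.le
  have h1 : sh j + 3 = ⌊((j:ℝ) * phi + phi⁻¹) + 3⌋₊ := by
    rw [show ((3:ℝ)) = ((3:ℕ):ℝ) by norm_num, Nat.floor_add_natCast h0, sh]
  rw [h1, sh]
  apply Nat.floor_le_floor
  push_cast
  nlinarith [phi_gt]

lemma sh_mono : StrictMono sh :=
  strictMono_nat_of_lt_succ (fun n => by have := sh_succ_ge n; omega)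

lemma sh_zero : sh 0 = 0 := by
  rw [sh]
  push_cast
  rw [zero_mul, zero_add]
  exact Nat.floor_eq_zero.mpr phi_inv_lt_one

lemma sh_one : sh 1 = 2 := by
  rw [sh]
  have h1 : ((1:ℕ):ℝ) * phi + phi⁻¹ = 2 * phi - 1 := by
    rw [phi_inv]; push_cast; ring
  rw [h1]
  rw [Nat.floor_eq_iff (by nlinarith [phi_gt])]
  constructor
  · push_cast; nlinarith [phi_gt]
  · push_cast; nlinarith [phi_lt]

lemma gap_dichotomy (j : ℕ) : sh (j+1) = sh j + 1 ∨ sh (j+1) = sh j + 2 := by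
  have := sh_succ_ge j
  have := sh_succ_le j
  omega

lemma eps_gap1 (m : ℕ) (h : sh (m+1) = sh m + 1) : eps (m+1) < 0 := by
  have h1 := sh_cast (m+1)
  have h2 := sh_cast m
  have h3 : ((sh (m+1) : ℕ) : ℝ) = (sh m : ℕ) + 1 := by rw [h]; push_cast; ring
  have h4 := (eps_window m).2
  rw [h1, h2] at h3
  push_cast at h3
  have h5 := phi_inv
  nlinarith [phi_gt]

lemma eps_gap2 (m : ℕ) (h : sh (m+1) = sh m + 2) : 0 < eps (m+1) := by
  have h1 := sh_cast (m+1)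
  have h2 := sh_cast m
  have h3 : ((sh (m+1) : ℕ) : ℝ) = (sh m : ℕ) + 2 := by rw [h]; push_cast; ring
  have h4 := (eps_window m).1
  rw [h1, h2] at h3
  push_cast at h3
  have h5 := phi_inv_sq
  nlinarith [phi_lt]

lemma gap1_of_eps_neg (m : ℕ) (h : eps (m+1) < 0) : sh (m+1) = sh m + 1 := by
  rcases gap_dichotomy m with hg | hg
  · exact hg
  · exact absurd (eps_gap2 m hg) (by linarith)

lemma gap2_of_eps_pos (m : ℕ) (h : 0 < eps (m+1)) : sh (m+1) = sh m + 2 := by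
  rcases gap_dichotomy m with hg | hg
  · exact absurd (eps_gap1 m hg) (by linarith)
  · exact hg

lemma sh_sh (m : ℕ) : sh (sh m) = sh m + m := by
  obtain ⟨S, h2, _, hsum⟩ := exists_zeck m
  have hinj : Set.InjOn (· + 1) ↑S := fun a _ b _ h => Nat.succ_injective h
  set S1 := S.image (· + 1) with hS1
  have h2' : ∀ i ∈ S1, 2 ≤ i := by
    intro i hi
    obtain ⟨a, ha, rfl⟩ := Finset.mem_image.mp hi
    have := h2 a ha
    show 2 ≤ a + 1
    omega
  have e4 := sh_spec S h2
  rw [hsum] at e4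
  have hsum1 : ∑ i ∈ S1, Nat.fib i = sh m := by
    rw [hS1, Finset.sum_image (fun a _ b _ h => Nat.succ_injective h), e4]
  have key := sh_spec S1 h2'
  rw [hsum1] at key
  rw [← key, hS1, Finset.sum_image (fun a _ b _ h => Nat.succ_injective h)]
  have hc : ∀ a ∈ S, Nat.fib (a + 1 + 1) = Nat.fib (a+1) + Nat.fib a := by
    intro a _
    rw [show a+1+1 = a+2 from rfl, Nat.fib_add_two]
    omega
  rw [Finset.sum_congr rfl hc, Finset.sum_add_distrib, e4, hsum]

lemma eps_sh (m : ℕ) : eps (sh m) = eps m * (1 - phi) := by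
  have h1 : ((sh (sh m) : ℕ) : ℝ) = (sh m : ℕ) + m := by rw [sh_sh]; push_cast; ring
  have h2 := sh_cast (sh m)
  have h3 := sh_cast m
  rw [h2, h3] at h1
  have h4 := phi_sq
  nlinarith [h1]

lemma index_le_fib (i : ℕ) : i ≤ Nat.fib i + 1 := by
  rcases Nat.lt_or_ge i 2 with h | h
  · interval_cases i <;> simp
  · have h2 := lt_fib_add_two (i-2)
    have h3 : i - 2 + 2 = i := by omega
    rw [h3] at h2
    omega

lemma finite_rep (P : ℕ → Prop) (N : ℕ) :
    Finite {S : Finset ℕ // (∀ i ∈ S, P i) ∧ ∑ i ∈ S, Nat.fib i = N} := by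
  have key : ∀ S : Finset ℕ, ((∀ i ∈ S, P i) ∧ ∑ i ∈ S, Nat.fib i = N) →
      S ∈ (Finset.range (N+2)).powerset := by
    intro S hS
    rw [Finset.mem_powerset]
    intro i hi
    rw [Finset.mem_range]
    have h1 : Nat.fib i ≤ N := by
      rw [← hS.2]
      exact Finset.single_le_sum (fun i _ => Nat.zero_le _) hi
    have := index_le_fib i
    omega
  refine Finite.of_injective
    (fun s : {S : Finset ℕ // (∀ i ∈ S, P i) ∧ ∑ i ∈ S, Nat.fib i = N} =>
      (⟨s.1, key s.1 s.2⟩ : {T // T ∈ (Finset.range (N+2)).powerset}))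
    (fun a b h => ?_)
  apply Subtype.ext
  exact Subtype.mk_eq_mk.mp h

instance rep2Finite (N : ℕ) :
    Finite {S : Finset ℕ // (∀ i ∈ S, 2 ≤ i) ∧ ∑ i ∈ S, Nat.fib i = N} := finite_rep _ N
instance rep3Finite (N : ℕ) :
    Finite {S : Finset ℕ // (∀ i ∈ S, 3 ≤ i) ∧ ∑ i ∈ S, Nat.fib i = N} := finite_rep _ N

noncomputable def R3 (N : ℕ) : ℕ :=
  Nat.card {S : Finset ℕ // (∀ i ∈ S, 3 ≤ i) ∧ ∑ i ∈ S, Nat.fib i = N}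

def upF (S : Finset ℕ) : Finset ℕ := S.map ⟨(· + 1), fun a b h => Nat.succ_injective h⟩
def downF (S : Finset ℕ) : Finset ℕ := S.image (· - 1)

lemma mem_upF {a : ℕ} {S : Finset ℕ} : a ∈ upF S ↔ ∃ b ∈ S, b + 1 = a := by
  simp [upF]
  exact Iff.rfl

lemma down_up (S : Finset ℕ) : downF (upF S) = S := by
  ext a
  simp only [downF, Finset.mem_image]
  constructor
  · rintro ⟨b, hb, rfl⟩
    rw [mem_upF] at hb
    obtain ⟨c, hc, rfl⟩ := hb
    simpa using hc
  · intro ha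
    exact ⟨a + 1, mem_upF.mpr ⟨a, ha, rfl⟩, by omega⟩

lemma up_down (S : Finset ℕ) (h1 : ∀ i ∈ S, 1 ≤ i) : upF (downF S) = S := by
  ext a
  rw [mem_upF]
  constructor
  · rintro ⟨b, hb, rfl⟩
    simp only [downF, Finset.mem_image] at hb
    obtain ⟨c, hc, rfl⟩ := hb
    have := h1 c hc
    have he : c - 1 + 1 = c := by omega
    rwa [he]
  · intro ha
    refine ⟨a - 1, ?_, by have := h1 a ha; omega⟩
    simp only [downF, Finset.mem_image]
    exact ⟨a, ha, rfl⟩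

lemma sum_upF (S : Finset ℕ) (f : ℕ → ℕ) : ∑ i ∈ upF S, f i = ∑ i ∈ S, f (i+1) :=
  Finset.sum_map S _ f

lemma sum_downF (S : Finset ℕ) (h1 : ∀ i ∈ S, 1 ≤ i) (f : ℕ → ℕ) :
    ∑ i ∈ downF S, f i = ∑ i ∈ S, f (i-1) := by
  apply Finset.sum_image
  intro a ha b hb h
  have := h1 a ha
  have := h1 b hb
  simp only at h
  omega

lemma down_sum_eq (S : Finset ℕ) (j : ℕ) (h3 : ∀ i ∈ S, 3 ≤ i)
    (hs : ∑ i ∈ S, Nat.fib i = sh j) : ∑ i ∈ downF S, Nat.fib i = j := by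
  have h1 : ∀ i ∈ S, 1 ≤ i := fun i hi => by have := h3 i hi; omega
  have h2D : ∀ i ∈ downF S, 2 ≤ i := by
    intro i hi
    simp only [downF, Finset.mem_image] at hi
    obtain ⟨c, hc, rfl⟩ := hi
    have := h3 c hc
    omega
  have key := sh_spec (downF S) h2D
  have e1 : ∑ i ∈ downF S, Nat.fib (i+1) = ∑ i ∈ S, Nat.fib i := by
    rw [sum_downF S h1]
    refine Finset.sum_congr rfl fun i hi => ?_
    have := h1 i hi
    congr 1
    omega
  rw [e1, hs] at key
  exact (sh_mono.injective key.symm)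

lemma R3_sh (j : ℕ) : R3 (sh j) = R j := by
  rw [R3, R]
  apply Nat.card_congr
  refine
    { toFun := fun s => ⟨downF s.1, ?down2, down_sum_eq s.1 j s.2.1 s.2.2⟩
      invFun := fun s => ⟨upF s.1, ?up3, ?upsum⟩
      left_inv := ?li
      right_inv := ?ri }
  case down2 =>
    intro i hi
    simp only [downF, Finset.mem_image] at hi
    obtain ⟨c, hc, rfl⟩ := hi
    have := s.2.1 c hc
    omega
  case up3 =>
    intro i hi
    rw [mem_upF] at hi
    obtain ⟨b, hb, rfl⟩ := hi
    have := s.2.1 b hb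
    omega
  case upsum =>
    have := sh_spec s.1 s.2.1
    rw [s.2.2] at this
    rw [sum_upF, this]
  case li =>
    intro s
    apply Subtype.ext
    exact up_down s.1 (fun i hi => by have := s.2.1 i hi; omega)
  case ri =>
    intro s
    apply Subtype.ext
    exact down_up s.1

lemma R3_zero (N : ℕ) (h : ∀ j, sh j ≠ N) : R3 N = 0 := by
  rw [R3]
  have : IsEmpty {S : Finset ℕ // (∀ i ∈ S, 3 ≤ i) ∧ ∑ i ∈ S, Nat.fib i = N} := by
    constructor
    rintro ⟨S, h3, hs⟩
    have h1 : ∀ i ∈ S, 1 ≤ i := fun i hi => by have := h3 i hi; omega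
    have h2D : ∀ i ∈ downF S, 2 ≤ i := by
      intro i hi
      simp only [downF, Finset.mem_image] at hi
      obtain ⟨c, hc, rfl⟩ := hi
      have := h3 c hc
      omega
    have key := sh_spec (downF S) h2D
    have e1 : ∑ i ∈ downF S, Nat.fib (i+1) = ∑ i ∈ S, Nat.fib i := by
      rw [sum_downF S h1]
      refine Finset.sum_congr rfl fun i hi => ?_
      have := h1 i hi
      congr 1
      omega
    rw [e1, hs] at key
    exact h _ key.symm
  exact Nat.card_of_isEmpty

lemma R_split (N : ℕ) : R (N+1) = R3 (N+1) + R3 N := by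
  rw [R, R3, R3, ← Nat.card_sum]
  apply Nat.card_congr
  classical
  refine
    { toFun := fun s => if h : 2 ∈ s.1 then
        Sum.inr ⟨s.1.erase 2, ?erase3, ?erasesum⟩
      else
        Sum.inl ⟨s.1, ?self3, s.2.2⟩
      invFun := fun t => t.elim (fun b => ⟨b.1, fun i hi => by have := b.2.1 i hi; omega, b.2.2⟩)
        (fun c => ⟨insert 2 c.1, ?ins2, ?inssum⟩)
      left_inv := ?li
      right_inv := ?ri }
  case erase3 =>
    intro i hi
    rw [Finset.mem_erase] at hi
    have := s.2.1 i hi.2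
    omega
  case erasesum =>
    have hadd := Finset.add_sum_erase s.1 Nat.fib h
    rw [s.2.2, Nat.fib_two] at hadd
    omega
  case self3 =>
    intro i hi
    have := s.2.1 i hi
    rcases Nat.lt_or_ge i 3 with hlt | hge
    · exfalso
      have : i = 2 := by omega
      rw [this] at hi
      exact h hi
    · exact hge
  case ins2 =>
    intro i hi
    rcases Finset.mem_insert.mp hi with rfl | hi'
    · omega
    · have := c.2.1 i hi'
      omega
  case inssum =>
    have hnot : 2 ∉ c.1 := fun hc => by have := c.2.1 2 hc; omega
    rw [Finset.sum_insert hnot, c.2.2, Nat.fib_two]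
    omega
  case li =>
    intro s
    dsimp only
    by_cases h : 2 ∈ s.1
    · rw [dif_pos h]
      apply Subtype.ext
      exact Finset.insert_erase h
    · rw [dif_neg h]
      rfl
  case ri =>
    intro t
    rcases t with b | c
    · have hnot : 2 ∉ b.1 := fun hb => by have := b.2.1 2 hb; omega
      dsimp only [Sum.elim_inl]
      rw [dif_neg hnot]
    · dsimp only [Sum.elim_inr]
      have hnot : 2 ∉ c.1 := fun hc => by have := c.2.1 2 hc; omega
      rw [dif_pos (Finset.mem_insert_self 2 c.1)]
      congr 1
      apply Subtype.ext
      exact Finset.erase_insert hnot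

lemma T_succ (m : ℕ) : T m + 1 = sh (m+1) := by
  have h0 : (0:ℝ) ≤ (m:ℝ) * phi + 2 / phi :=
    add_nonneg (mul_nonneg (Nat.cast_nonneg m) phi_pos.le)
      (div_nonneg (by norm_num) phi_pos.le)
  have he : ((m+1:ℕ):ℝ) * phi + phi⁻¹ = ((m:ℝ) * phi + 2 / phi) + 1 := by
    rw [div_eq_mul_inv, phi_inv]
    push_cast
    nlinarith [phi_sq]
  rw [T, sh, he, Nat.floor_add_one h0]

lemma sh_one_le (m : ℕ) (hm : 1 ≤ m) : 2 ≤ sh m := by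
  have := sh_mono.monotone hm
  rw [sh_one] at this
  exact this

lemma R3_notrange_succ (m : ℕ) (hg : sh (m+1) = sh m + 2) : R3 (sh m + 1) = 0 := by
  apply R3_zero
  intro s
  rcases Nat.lt_or_ge s (m+1) with h | h
  · have : sh s ≤ sh m := sh_mono.monotone (by omega)
    omega
  · have : sh (m+1) ≤ sh s := sh_mono.monotone h
    omega

lemma R_T (m : ℕ) : R (T m) = R m := by
  have hTs := T_succ m
  rcases gap_dichotomy m with hg | hg
  · -- T m = sh m, and m ≥ 1
    have hTm : T m = sh m := by omega
    have hm1 : 1 ≤ m := by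
      by_contra h
      have hm0 : m = 0 := by omega
      rw [hm0, sh_one, sh_zero] at hg
      omega
    have h2 : 2 ≤ sh m := sh_one_le m hm1
    obtain ⟨Y, hY⟩ : ∃ Y, sh m = Y + 2 := ⟨sh m - 2, by omega⟩
    have hz : R3 (Y + 1) = 0 := by
      apply R3_zero
      intro s
      rcases Nat.lt_or_ge s m with h | h
      · have h1 : sh s ≤ sh (m-1) := sh_mono.monotone (by omega)
        have h3 : sh (m-1) + 3 ≤ sh (m-1+2) := sh_add3 (m-1)
        have h4 : m - 1 + 2 = m + 1 := by omega
        rw [h4] at h3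
        omega
      · have : sh m ≤ sh s := sh_mono.monotone h
        omega
    have hsplit := R_split (Y+1)
    rw [hTm, hY]
    rw [show Y + 1 + 1 = Y + 2 from rfl] at hsplit
    rw [hsplit, hz, ← hY, R3_sh]
    omega
  · -- T m = sh m + 1
    have hTm : T m = sh m + 1 := by omega
    have hz : R3 (sh m + 1) = 0 := R3_notrange_succ m hg
    rw [hTm, R_split (sh m), hz, R3_sh]
    omega

lemma rho2_eq (j : ℕ) : rho2 j = j + sh j := by
  have h0 : (0:ℝ) ≤ (j:ℝ) * phi + phi⁻¹ :=
    add_nonneg (mul_nonneg (Nat.cast_nonneg j) phi_pos.le) phi_inv_pos.le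
  have he : (j:ℝ) * phi^2 + 1 / phi = ((j:ℝ) * phi + phi⁻¹) + j := by
    rw [one_div, phi_sq]
    ring
  rw [rho2, he, sh]
  rw [Nat.floor_add_natCast h0]
  omega

lemma R_rho2 (m : ℕ) : R (rho2 (m+1)) = R (m+1) + R m := by
  obtain ⟨M, hMdef⟩ : ∃ M, M = sh (m+1) := ⟨_, rfl⟩
  have hM2 : 2 ≤ M := by rw [hMdef]; exact sh_one_le (m+1) (by omega)
  obtain ⟨W, hW⟩ : ∃ W, M = W + 1 := ⟨M - 1, by omega⟩
  have hr : rho2 (m+1) = sh M := by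
    rw [rho2_eq, hMdef, sh_sh]
    omega
  have hshM : 3 ≤ sh M := by
    have h1 : sh 2 ≤ sh M := sh_mono.monotone hM2
    have h2 : 3 ≤ sh 2 := by
      have h3 := sh_add3 0
      rw [sh_zero] at h3
      simpa using h3
    omega
  obtain ⟨Z, hZ⟩ : ∃ Z, sh M = Z + 1 := ⟨sh M - 1, by omega⟩
  have hsplit1 : R (sh M) = R3 (sh M) + R3 Z := by rw [hZ, R_split Z]
  have hsplit2 : R M = R3 M + R3 W := by rw [hW, R_split W]
  have hfirst : R3 (sh M) = R M := R3_sh M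
  have hR3M : R3 M = R (m+1) := by rw [hMdef]; exact R3_sh (m+1)
  rcases gap_dichotomy m with hg | hg
  · -- sh(m+1) = sh m + 1
    have hW2 : W = sh m := by omega
    have hR3W : R3 W = R m := by rw [hW2]; exact R3_sh m
    have he1 : eps (m+1) < 0 := eps_gap1 m hg
    have he2 : 0 < eps M := by
      rw [hMdef, eps_sh]
      nlinarith [phi_gt]
    have he2' : 0 < eps (W+1) := by rw [← hW]; exact he2
    have hgapM : sh (W+1) = sh W + 2 := gap2_of_eps_pos W he2'
    have hgapM' : sh M = sh W + 2 := by rw [hW]; exact hgapM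
    have hzZ : R3 Z = 0 := by
      rw [show Z = sh W + 1 by omega]
      exact R3_notrange_succ W hgapM
    rw [hr, hsplit1, hfirst, hsplit2, hR3M, hR3W, hzZ]
    omega
  · -- sh(m+1) = sh m + 2
    have hzW : R3 W = 0 := by
      rw [show W = sh m + 1 by omega]
      exact R3_notrange_succ m hg
    have he1 : 0 < eps (m+1) := eps_gap2 m hg
    have he2 : eps M < 0 := by
      rw [hMdef, eps_sh]
      nlinarith [phi_gt]
    have he2' : eps (W+1) < 0 := by rw [← hW]; exact he2
    have hgapM : sh (W+1) = sh W + 1 := gap1_of_eps_neg W he2'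
    have hgapM' : sh M = sh W + 1 := by rw [hW]; exact hgapM
    have hZW : Z = sh W := by omega
    have hlast : R3 Z = R m := by
      rw [hZW, R3_sh W, show W = sh m + 1 by omega, R_split (sh m),
        R3_notrange_succ m hg, R3_sh m]
      omega
    rw [hr, hsplit1, hfirst, hsplit2, hR3M, hzW, hlast]
    omega

lemma fib_ge_two (n : ℕ) (hn : 3 ≤ n) : 2 ≤ Nat.fib n := by
  have h := Nat.fib_mono hn
  have h3 : Nat.fib 3 = 2 := rfl
  omega

lemma eps_avoid (n j : ℕ) (hn : 3 ≤ n) (hj : 1 ≤ j) (hub : j ≤ Nat.fib (n-1) + 1) :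
    (Even n → eps j < 0 → phi⁻¹^n < -eps j) ∧ (Odd n → 0 < eps j → phi⁻¹^n < eps j) := by
  obtain ⟨c, hc2, hfib, hl, hr⟩ := eps_sign j hj
  have hpowpos : (0:ℝ) < phi⁻¹^(c+1) := pow_pos phi_inv_pos _
  have hbig : n ≤ c → n % 2 ≠ c % 2 → False := by
    intro hnc hpar
    have hc1 : n + 1 ≤ c := by omega
    have hmono : Nat.fib (n+1) ≤ Nat.fib c := Nat.fib_mono hc1
    have hadd : Nat.fib (n+1) = Nat.fib (n-1) + Nat.fib n := by
      have e : n - 1 + 2 = n + 1 := by omega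
      have e2 : n - 1 + 1 = n := by omega
      rw [← e, Nat.fib_add_two, e2]
    have h2 := fib_ge_two n hn
    omega
  constructor
  · intro hev hneg
    have hodd : Odd c := by
      rcases Nat.even_or_odd c with hc | hc
      · exfalso
        rw [hc.neg_one_pow, one_mul] at hl
        linarith
      · exact hc
    rw [hodd.neg_one_pow, neg_one_mul] at hl
    have hcle : c + 1 ≤ n := by
      by_contra h
      apply hbig (by omega)
      rcases hev with ⟨t, rfl⟩
      rcases hodd with ⟨s, rfl⟩
      omega
    have : phi⁻¹^n ≤ phi⁻¹^(c+1) :=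
      pow_le_pow_of_le_one phi_inv_pos.le phi_inv_lt_one.le hcle
    linarith
  · intro hodd hpos
    have hevc : Even c := by
      rcases Nat.even_or_odd c with hc | hc
      · exact hc
      · exfalso
        rw [hc.neg_one_pow, neg_one_mul] at hl
        linarith
    rw [hevc.neg_one_pow, one_mul] at hl
    have hcle : c + 1 ≤ n := by
      by_contra h
      apply hbig (by omega)
      rcases hodd with ⟨t, rfl⟩
      rcases hevc with ⟨s, rfl⟩
      omega
    have : phi⁻¹^n ≤ phi⁻¹^(c+1) :=
      pow_le_pow_of_le_one phi_inv_pos.le phi_inv_lt_one.le hcle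
    linarith

lemma sh_shift (n k : ℕ) (hn : 3 ≤ n) (hk : k ≤ Nat.fib (n-1)) :
    sh (Nat.fib n + k) = Nat.fib (n+1) + sh k := by
  have hj1 : 1 ≤ k+1 := by omega
  have havoid := eps_avoid n (k+1) hn hj1 (by omega)
  have hepsw := eps_window (k+1)
  have hepsne := eps_ne (k+1) hj1
  have hx0 : (0:ℝ) ≤ (k:ℝ) * phi + phi⁻¹ :=
    add_nonneg (mul_nonneg (Nat.cast_nonneg k) phi_pos.le) phi_inv_pos.le
  have hfl : ((sh k : ℕ) : ℝ) ≤ (k:ℝ)*phi + phi⁻¹ := Nat.floor_le hx0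
  have hfl2 : (k:ℝ)*phi + phi⁻¹ < (sh k : ℕ) + 1 := Nat.lt_floor_add_one _
  obtain ⟨δ, hδdef⟩ : ∃ δ:ℝ, δ = (k:ℝ)*phi + phi⁻¹ - (sh k : ℕ) := ⟨_, rfl⟩
  have hδ0 : 0 ≤ δ := by rw [hδdef]; linarith
  have hδ1 : δ < 1 := by rw [hδdef]; linarith
  have hkey : δ + eps (k+1) = ((sh (k+1) : ℕ) : ℝ) - 1 - ((sh k : ℕ) : ℝ) := by
    rw [hδdef, eps]
    push_cast
    rw [phi_inv]
    ring
  -- value of δ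
  have hδcase : (δ = - eps (k+1) ∧ eps (k+1) < 0) ∨ (δ = 1 - eps (k+1) ∧ 0 < eps (k+1)) := by
    rcases gap_dichotomy k with hgap | hgap
    · left
      have h1 : ((sh (k+1) : ℕ) : ℝ) = ((sh k : ℕ) : ℝ) + 1 := by rw [hgap]; push_cast; ring
      have h2 : δ = - eps (k+1) := by rw [h1] at hkey; linarith
      refine ⟨h2, ?_⟩
      rcases lt_or_gt_of_ne hepsne with h | h
      · exact h
      · exfalso; rw [h2] at hδ0; linarith
    · right
      have h1 : ((sh (k+1) : ℕ) : ℝ) = ((sh k : ℕ) : ℝ) + 2 := by rw [hgap]; push_cast; ring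
      have h2 : δ = 1 - eps (k+1) := by rw [h1] at hkey; linarith
      refine ⟨h2, ?_⟩
      rcases lt_or_gt_of_ne hepsne with h | h
      · exfalso; rw [h2] at hδ1; linarith
      · exact h
  -- key bounds on w := δ - psi^n
  have hpow3 : phi⁻¹^n ≤ phi⁻¹^3 :=
    pow_le_pow_of_le_one phi_inv_pos.le phi_inv_lt_one.le hn
  have hb1 : phi⁻¹ ≤ 0.61804 := by rw [phi_inv]; linarith [phi_lt]
  have hcube : phi⁻¹^3 ≤ (0.61804:ℝ)^3 := pow_le_pow_left₀ phi_inv_pos.le hb1 3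
  have hcube' : phi⁻¹^3 < 0.24 := by nlinarith [hcube]
  have hppos : (0:ℝ) < phi⁻¹^n := pow_pos phi_inv_pos n
  have hw : 0 ≤ δ - psi^n ∧ δ - psi^n < 1 := by
    rcases Nat.even_or_odd n with he | ho
    · have hpsin : psi^n = phi⁻¹^n := by rw [psi_eq_neg_inv]; exact he.neg_pow _
      rw [hpsin]
      constructor
      · rcases hδcase with ⟨hδv, hsg⟩ | ⟨hδv, hsg⟩
        · have := (havoid.1 he hsg)
          rw [hδv]
          linarith
        · rw [hδv]
          have h1 : eps (k+1) < phi⁻¹ := hepsw.2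
          have h2 := phi_inv_sq
          have h3 : phi⁻¹^2 ≥ 0.38 := by rw [h2]; linarith [phi_lt]
          linarith
      · linarith
    · have hpsin : psi^n = -(phi⁻¹^n) := by rw [psi_eq_neg_inv]; exact ho.neg_pow _
      rw [hpsin]
      constructor
      · linarith
      · rcases hδcase with ⟨hδv, hsg⟩ | ⟨hδv, hsg⟩
        · rw [hδv]
          have h1 : -eps (k+1) < phi⁻¹^2 := by linarith [hepsw.1]
          have h3 : phi⁻¹^2 ≤ 0.39 := by rw [phi_inv_sq]; linarith [phi_gt]
          linarith
        · have := (havoid.2 ho hsg)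
          rw [hδv]
          linarith
  -- final floor computation
  have hexpr : ((Nat.fib n + k : ℕ):ℝ)*phi + phi⁻¹
      = ((Nat.fib (n+1) + sh k : ℕ):ℝ) + (δ - psi^n) := by
    push_cast
    rw [add_mul, fib_phi n, hδdef]
    ring
  rw [sh, hexpr]
  have hX0 : (0:ℝ) ≤ ((Nat.fib (n+1) + sh k : ℕ):ℝ) + (δ - psi^n) :=
    add_nonneg (Nat.cast_nonneg _) hw.1
  have h1 : Nat.fib (n+1) + sh k ≤ ⌊((Nat.fib (n+1) + sh k : ℕ):ℝ) + (δ - psi^n)⌋₊ :=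
    Nat.le_floor (by linarith [hw.1])
  have h2 : ⌊((Nat.fib (n+1) + sh k : ℕ):ℝ) + (δ - psi^n)⌋₊ < Nat.fib (n+1) + sh k + 1 := by
    rw [Nat.floor_lt hX0]
    push_cast
    linarith [hw.2]
  omega

lemma T_shift (n k : ℕ) (hn : 3 ≤ n) (hk : k + 1 ≤ Nat.fib (n-1)) :
    T (Nat.fib n + k) = Nat.fib (n+1) + T k := by
  have h1 := T_succ (Nat.fib n + k)
  have h2 := T_succ k
  have h3 : Nat.fib n + k + 1 = Nat.fib n + (k+1) := by omega
  rw [h3] at h1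
  have h4 := sh_shift n (k+1) hn hk
  omega

/-- The recursions for the ratios `q(k, F_n) = R_k / R_{F_n + k}`. -/
theorem q_recurrences (n k : ℕ) (hn : 3 ≤ n) (hk : k ≤ Nat.fib (n - 1) - 1) :
    q (T k) (Nat.fib (n + 1)) = q k (Nat.fib n) ∧
      (1 ≤ k →
        q (rho2 k) (Nat.fib (n + 2)) =
          ((R k : ℚ) + (R (k - 1) : ℚ)) /
            ((R (Nat.fib n + k) : ℚ) + (R (Nat.fib n + k - 1) : ℚ))) := by
  have hfib1 : 1 ≤ Nat.fib (n-1) := Nat.fib_pos.mpr (by omega)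
  have hk' : k + 1 ≤ Nat.fib (n-1) := by omega
  constructor
  · rw [q, q, R_T k]
    have hTs : T (Nat.fib n + k) = Nat.fib (n+1) + T k := T_shift n k hn hk'
    rw [← hTs, R_T]
  · intro hk1
    obtain ⟨k', rfl⟩ : ∃ k', k = k' + 1 := ⟨k - 1, by omega⟩
    rw [q]
    have hden : Nat.fib (n+2) + rho2 (k'+1) = rho2 (Nat.fib n + (k'+1)) := by
      rw [rho2_eq (k'+1), rho2_eq (Nat.fib n + (k'+1))]
      have hs : sh (Nat.fib n + (k'+1)) = Nat.fib (n+1) + sh (k'+1) :=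
        sh_shift n (k'+1) hn (by omega)
      have hf : Nat.fib (n+2) = Nat.fib n + Nat.fib (n+1) := Nat.fib_add_two
      omega
    have e1 : Nat.fib n + (k'+1) = Nat.fib n + k' + 1 := by omega
    rw [hden, e1, R_rho2 (Nat.fib n + k'), R_rho2 k']
    have e2 : k' + 1 - 1 = k' := by omega
    have e3 : Nat.fib n + k' + 1 - 1 = Nat.fib n + k' := by omega
    rw [e2, e3]
    push_cast
    ring
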